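/- Let M be a nonempty compact connected topological space equipped with a finite Borel measure μ, let β : M → ℝ be continuous, let u : M → ℝ be Borel measurable such that m ↦ |u(m)|^{β(m)} is integrable, and let c > 0 be a constant satisfying ∫_M (|u(m)|/c)^{β(m)} dμ(m) = 1. Then there exists ζ ∈ M such that ∫_M |u(m)|^{β(m)} dμ(m) = c^{β(ζ)}. -/

import Mathlib

/-!
Since `|u|^β = c^β · (|u|/c)^β` and the weight `(|u|/c)^β` is nonnegative with integral `1`,
the first mean value theorem for integrals, applied to the continuous function `c^β` on a
connected space, gives a point `ζ` with `∫ |u|^β = c^{β(ζ)} · 1`.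
-/

open MeasureTheory

theorem exists_integral_mul_eq_mul_integral_of_ae_nonneg {α : Type*} [TopologicalSpace α]
    [ConnectedSpace α] [MeasurableSpace α] {μ : Measure α} {f g : α → ℝ} (hf : Continuous f)
    (hg : Integrable g μ) (hfg : Integrable (fun x ↦ f x * g x) μ) (hg0 : 0 ≤ᵐ[μ] g) :
    ∃ ζ, ∫ x, f x * g x ∂μ = f ζ * ∫ x, g x ∂μ := by
  obtain ⟨ζ, -, hζ⟩ := exists_eq_const_mul_setIntegral_of_ae_nonneg isConnected_univ
    MeasurableSet.univ hf.continuousOn hg.integrableOn hfg.integrableOn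
    (by rwa [Measure.restrict_univ])
  exact ⟨ζ, by simpa only [setIntegral_univ] using hζ⟩

theorem stmt_1_general {M : Type*} [TopologicalSpace M]
    [ConnectedSpace M] [MeasurableSpace M]
    (μ : Measure M)
    (β : M → ℝ) (hβ : Continuous β)
    (u : M → ℝ)
    (h_int : Integrable (fun m => |u m| ^ (β m)) μ)
    (c : ℝ) (hc : 0 < c)
    (h_unit : ∫ m, (|u m| / c) ^ (β m) ∂μ = 1) :
    ∃ ζ : M, ∫ m, |u m| ^ (β m) ∂μ = c ^ (β ζ) := by
  have h_factor : (fun m ↦ c ^ β m * (|u m| / c) ^ β m) = fun m ↦ |u m| ^ β m := by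
    ext m
    rw [← Real.mul_rpow hc.le (div_nonneg (abs_nonneg _) hc.le), mul_div_cancel₀ _ hc.ne']
  have h_weight_int : Integrable (fun m ↦ (|u m| / c) ^ β m) μ :=
    .of_integral_ne_zero (by rw [h_unit]; exact one_ne_zero)
  obtain ⟨ζ, hζ⟩ := exists_integral_mul_eq_mul_integral_of_ae_nonneg
    (continuous_const.rpow hβ fun _ ↦ .inl hc.ne') h_weight_int (h_factor ▸ h_int)
    (.of_forall fun m ↦ Real.rpow_nonneg (div_nonneg (abs_nonneg _) hc.le) _)
  exact ⟨ζ, by rwa [h_factor, h_unit, mul_one] at hζ⟩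

/-- On a nonempty compact connected space with a finite Borel
measure, if `c > 0` satisfies the unit-modular equation
`∫ (|u(m)|/c)^{β(m)} dμ = 1`, then `∫ |u(m)|^{β(m)} dμ = c^{β(ζ)}` for some
point `ζ`. -/
theorem stmt_1 {M : Type*} [TopologicalSpace M] [CompactSpace M]
    [ConnectedSpace M] [Nonempty M] [MeasurableSpace M] [BorelSpace M]
    (μ : Measure M) [IsFiniteMeasure μ]
    (β : M → ℝ) (hβ : Continuous β)
    (u : M → ℝ) (hu : Measurable u)
    (h_int : Integrable (fun m => |u m| ^ (β m)) μ)
    (c : ℝ) (hc : 0 < c)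
    (h_unit : ∫ m, (|u m| / c) ^ (β m) ∂μ = 1) :
    ∃ ζ : M, ∫ m, |u m| ^ (β m) ∂μ = c ^ (β ζ) :=
  stmt_1_general μ β hβ u h_int c hc h_unit
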